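/- arXiv:1711.01462 — 2 statements merged into one kernel-verified Lean document; each statement's English description precedes it below -/
import Mathlib

section
/- Let H ≤ π₁^s(X,x₀). If X is locally path connected and a strong H-SLT space at x₀, then π₁^s(X,x₀) equals the Spanier group π₁^{sp}(X,x₀). -/
open CategoryTheory unitInterval
open scoped Topology

attribute [local instance] Path.Homotopic.setoid

noncomputable section

/-- The homotopy class of a loop as an element of the fundamental group. -/
def loopClass {X : Type*} [TopologicalSpace X] {x : X} (γ : Path x x) :
    FundamentalGroup X x :=
  FundamentalGroup.fromPath
    (⟦γ⟧ : Path.Homotopic.Quotient x x)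

variable {X : Type*} [TopologicalSpace X]

/-- The Spanier group of a family of subsets of `X`, based at `x`: the subgroup generated by
classes `[α∗β∗α⁻¹]` where `α` is a path from `x` and `β` is a loop inside a member of `𝒰`. -/
def spanierGroupAt (x : X) (𝒰 : Set (Set X)) : Subgroup (FundamentalGroup X x) :=
  Subgroup.closure {g | ∃ (y : X) (α : Path x y) (β : Path y y) (U : Set X),
    U ∈ 𝒰 ∧ (∀ t, β t ∈ U) ∧ g = loopClass (α.trans (β.trans α.symm))}

/-- `𝒰` is an open cover of `X`. -/
def IsOpenCover (𝒰 : Set (Set X)) : Prop := (∀ U ∈ 𝒰, IsOpen U) ∧ ⋃₀ 𝒰 = Set.univ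

/-- `X` is a strong `H`-SLT space at `x₀`: for every `x ∈ X` and every open neighborhood `U`
of `x₀` there is an open neighborhood `V` of `x` such that for every loop `β` in `V` based at
`x` and every path `α` from `x₀` to `x` there is a loop `λ` in `U` based at `x₀` with
`[α∗β∗α⁻¹∗λ⁻¹] ∈ H`. -/
def StrongHSLTAt (x₀ : X) (H : Subgroup (FundamentalGroup X x₀)) : Prop :=
  ∀ (x : X) (U : Set X), IsOpen U → x₀ ∈ U →
    ∃ V : Set X, IsOpen V ∧ x ∈ V ∧
      ∀ (β : Path x x), (∀ t, β t ∈ V) → ∀ (α : Path x₀ x),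
        ∃ lam : Path x₀ x₀, (∀ t, lam t ∈ U) ∧
          loopClass (α.trans (β.trans α.symm)) * (loopClass lam)⁻¹ ∈ H

/-- The set of classes of small loops at `x₀`: loops that, for every open neighborhood `U`
of `x₀`, are homotopic (rel endpoints) to a loop inside `U`. -/
def smallLoopSet (x₀ : X) : Set (FundamentalGroup X x₀) :=
  {g | ∀ U : Set X, IsOpen U → x₀ ∈ U →
    ∃ γ : Path x₀ x₀, (∀ t, γ t ∈ U) ∧ loopClass γ = g}

/-- A path open cover: a choice, for each path `α` from `x₀`, of an open neighborhood
of its endpoint `α(1)`. -/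
def IsPathOpenCover (x₀ : X) (V : (Σ y : X, Path x₀ y) → Set X) : Prop :=
  ∀ a, IsOpen (V a) ∧ a.1 ∈ V a

/-- The path Spanier subgroup `π̃(𝒱, x₀)`, generated by `[α∗β∗α⁻¹]` with `β` a loop
in `V_α`. -/
def pathSpanierSub (x₀ : X) (V : (Σ y : X, Path x₀ y) → Set X) :
    Subgroup (FundamentalGroup X x₀) :=
  Subgroup.closure {g | ∃ (y : X) (α : Path x₀ y) (β : Path y y),
    (∀ t, β t ∈ V ⟨y, α⟩) ∧ g = loopClass (α.trans (β.trans α.symm))}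

/-- The path Spanier group `π̃₁^{sp}(X, x₀)`: the intersection of all path Spanier
subgroups over path open covers. -/
def pathSpanierWhole (x₀ : X) : Subgroup (FundamentalGroup X x₀) :=
  ⨅ (V : (Σ y : X, Path x₀ y) → Set X) (_ : IsPathOpenCover x₀ V), pathSpanierSub x₀ V

/-- The Spanier group `π₁^{sp}(X, x₀)`: the intersection of the Spanier subgroups over all
open covers of `X`. -/
def spanierWhole (x₀ : X) : Subgroup (FundamentalGroup X x₀) :=
  ⨅ (𝒰 : Set (Set X)) (_ : IsOpenCover 𝒰), spanierGroupAt x₀ 𝒰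

/-!
Small loops lie in every Spanier subgroup: a small loop class is represented by a loop inside a
member of the cover containing `x₀`, and is then a generator with `α` constant.

Conversely, fix an open `U ∋ x₀`. The strong `H`-SLT property gives a neighbourhood `V_x` of
every `x`; the path components of `x` in `V_x` are open by local path connectedness and cover
`X`. For a generator `[α∗β∗α⁻¹]` of the Spanier group of this cover, rebasing `β` along a path in
`V_x` to a loop at `x` shows that it agrees modulo `H` with a loop in `U`. Since `H` consists of
small loops and the classes of loops in `U` form a subgroup, it is itself the class of a loop in
`U`.
-/

theorem Path.trans_mem {U : Set X} {a b c : X} {p : Path a b} {q : Path b c}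
    (hp : ∀ t, p t ∈ U) (hq : ∀ t, q t ∈ U) (t : I) : p.trans q t ∈ U := by
  have : Set.range (p.trans q) ⊆ U := by
    rw [Path.trans_range]
    exact Set.union_subset (Set.range_subset_iff.2 hp) (Set.range_subset_iff.2 hq)
  exact this ⟨t, rfl⟩

theorem Path.symm_mem {U : Set X} {a b : X} {p : Path a b} (hp : ∀ t, p t ∈ U) (t : I) :
    p.symm t ∈ U :=
  hp (σ t)

theorem loopClass_trans {x : X} (γ γ' : Path x x) :
    loopClass (γ.trans γ') = loopClass γ' * loopClass γ :=
  rfl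

theorem loopClass_refl_conj {x : X} (γ : Path x x) :
    loopClass ((Path.refl x).trans (γ.trans (Path.refl x).symm)) = loopClass γ :=
  show 𝟙 (FundamentalGroupoid.mk x) ≫ ((⟦γ⟧ : Path.Homotopic.Quotient x x) ≫
      Groupoid.inv (𝟙 (FundamentalGroupoid.mk x))) = ⟦γ⟧ by
    simp [Groupoid.inv_eq_inv]

theorem Groupoid.conj_comp_inv_conj {C : Type*} [Groupoid C] {a b c : C}
    (f : a ⟶ c) (g : b ⟶ c) (h : c ⟶ c) :
    (f ≫ Groupoid.inv g) ≫ ((g ≫ h ≫ Groupoid.inv g) ≫ Groupoid.inv (f ≫ Groupoid.inv g)) =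
      f ≫ h ≫ Groupoid.inv f := by
  simp [Groupoid.inv_eq_inv]

theorem loopClass_conj_eq_conj_rebase {x₀ x y : X} (α : Path x₀ y) (δ : Path x y)
    (β : Path y y) :
    loopClass (α.trans (β.trans α.symm)) =
      loopClass ((α.trans δ.symm).trans
        ((δ.trans (β.trans δ.symm)).trans (α.trans δ.symm).symm)) :=
  (Groupoid.conj_comp_inv_conj (C := FundamentalGroupoid X)
    (⟦α⟧ : Path.Homotopic.Quotient x₀ y)
    (⟦δ⟧ : Path.Homotopic.Quotient x y) (⟦β⟧ : Path.Homotopic.Quotient y y)).symm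

variable {x₀ : X}

def loopClassesIn (U : Set X) (hU : x₀ ∈ U) : Subgroup (FundamentalGroup X x₀) where
  carrier := {g | ∃ γ : Path x₀ x₀, (∀ t, γ t ∈ U) ∧ loopClass γ = g}
  one_mem' := ⟨Path.refl x₀, fun _ ↦ hU, rfl⟩
  mul_mem' := by
    rintro _ _ ⟨γ, hγ, rfl⟩ ⟨γ', hγ', rfl⟩
    exact ⟨γ'.trans γ, Path.trans_mem hγ' hγ, loopClass_trans γ' γ⟩
  inv_mem' := by
    rintro _ ⟨γ, hγ, rfl⟩
    exact ⟨γ.symm, Path.symm_mem hγ, rfl⟩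

theorem smallLoopSet_subset_loopClassesIn {U : Set X} (hUo : IsOpen U) (hU : x₀ ∈ U) :
    smallLoopSet x₀ ⊆ loopClassesIn U hU :=
  fun _ hg ↦ hg U hUo hU

theorem smallLoopSet_subset_spanierGroupAt {𝒰 : Set (Set X)} (hUo : ∀ U ∈ 𝒰, IsOpen U)
    (h𝒰 : x₀ ∈ ⋃₀ 𝒰) : smallLoopSet x₀ ⊆ spanierGroupAt x₀ 𝒰 := by
  obtain ⟨U, hU𝒰, hx₀U⟩ := h𝒰
  rintro g hg
  obtain ⟨γ, hγ, rfl⟩ := hg U (hUo U hU𝒰) hx₀U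
  exact Subgroup.subset_closure
    ⟨x₀, Path.refl x₀, γ, U, hU𝒰, hγ, (loopClass_refl_conj γ).symm⟩

theorem smallLoopSet_subset_spanierWhole :
    smallLoopSet x₀ ⊆ (spanierWhole x₀ : Set (FundamentalGroup X x₀)) := by
  intro g hg
  simp only [SetLike.mem_coe, spanierWhole, Subgroup.mem_iInf]
  exact fun 𝒰 h𝒰 ↦
    smallLoopSet_subset_spanierGroupAt h𝒰.1 (h𝒰.2 ▸ Set.mem_univ x₀) hg

theorem mem_loopClassesIn_of_mul_inv_mem {H : Subgroup (FundamentalGroup X x₀)} {U : Set X}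
    (hUo : IsOpen U) (hU : x₀ ∈ U) (hH : (H : Set _) ⊆ smallLoopSet x₀)
    {g : FundamentalGroup X x₀} {lam : Path x₀ x₀} (hlam : ∀ t, lam t ∈ U)
    (hg : g * (loopClass lam)⁻¹ ∈ H) : g ∈ loopClassesIn U hU := by
  have hlamU : loopClass lam ∈ loopClassesIn U hU := ⟨lam, hlam, rfl⟩
  have := mul_mem (smallLoopSet_subset_loopClassesIn hUo hU (hH hg)) hlamU
  rwa [inv_mul_cancel_right] at this

/-- Rebasing `β` to `x` along a path from `x` to `y` in `V` reduces this to the strong `H`-SLT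
condition at `x`. -/
theorem conj_mem_loopClassesIn_of_joinedIn {H : Subgroup (FundamentalGroup X x₀)} {U : Set X}
    (hUo : IsOpen U) (hU : x₀ ∈ U) (hH : (H : Set _) ⊆ smallLoopSet x₀)
    {x y : X} {V : Set X}
    (hV : ∀ β : Path x x, (∀ t, β t ∈ V) → ∀ α : Path x₀ x, ∃ lam : Path x₀ x₀,
      (∀ t, lam t ∈ U) ∧ loopClass (α.trans (β.trans α.symm)) * (loopClass lam)⁻¹ ∈ H)
    (hxy : JoinedIn V x y) (α : Path x₀ y) (β : Path y y) (hβ : ∀ t, β t ∈ V) :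
    loopClass (α.trans (β.trans α.symm)) ∈ loopClassesIn U hU := by
  obtain ⟨δ, hδ⟩ := hxy
  obtain ⟨lam, hlam, hmem⟩ := hV (δ.trans (β.trans δ.symm))
    (Path.trans_mem hδ (Path.trans_mem hβ (Path.symm_mem hδ))) (α.trans δ.symm)
  rw [loopClass_conj_eq_conj_rebase α δ]
  exact mem_loopClassesIn_of_mul_inv_mem hUo hU hH hlam hmem

theorem exists_isOpenCover_spanierGroupAt_le_loopClassesIn [LocallyPathConnectedSpace X]
    {H : Subgroup (FundamentalGroup X x₀)} (hH : (H : Set _) ⊆ smallLoopSet x₀)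
    (hSLT : StrongHSLTAt x₀ H) {U : Set X} (hUo : IsOpen U) (hU : x₀ ∈ U) :
    ∃ 𝒰, IsOpenCover 𝒰 ∧ spanierGroupAt x₀ 𝒰 ≤ loopClassesIn U hU := by
  choose V hVo hxV hV using fun x ↦ hSLT x U hUo hU
  refine ⟨Set.range fun x ↦ pathComponentIn (V x) x, ⟨?_, ?_⟩, ?_⟩
  · rintro _ ⟨x, rfl⟩
    exact (hVo x).pathComponentIn x
  · exact Set.eq_univ_of_forall fun x ↦ ⟨_, ⟨x, rfl⟩, mem_pathComponentIn_self (hxV x)⟩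
  · rw [spanierGroupAt, Subgroup.closure_le]
    rintro _ ⟨y, α, β, _, ⟨x, rfl⟩, hβ, rfl⟩
    have hxy : JoinedIn (V x) x y := β.source ▸ hβ 0
    exact conj_mem_loopClassesIn_of_joinedIn hUo hU hH (hV x) hxy α β
      fun t ↦ pathComponentIn_subset (hβ t)

theorem spanierWhole_subset_smallLoopSet [LocallyPathConnectedSpace X]
    {H : Subgroup (FundamentalGroup X x₀)} (hH : (H : Set _) ⊆ smallLoopSet x₀)
    (hSLT : StrongHSLTAt x₀ H) :
    (spanierWhole x₀ : Set (FundamentalGroup X x₀)) ⊆ smallLoopSet x₀ := by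
  intro g hg U hUo hU
  obtain ⟨𝒰, h𝒰, hle⟩ := exists_isOpenCover_spanierGroupAt_le_loopClassesIn hH hSLT hUo hU
  simp only [SetLike.mem_coe, spanierWhole, Subgroup.mem_iInf] at hg
  exact hle (hg 𝒰 h𝒰)

theorem smallLoopSet_eq_spanier_of_strongHSLT
    [LocallyPathConnectedSpace X] {x₀ : X} (H : Subgroup (FundamentalGroup X x₀))
    (hH : (H : Set (FundamentalGroup X x₀)) ⊆ smallLoopSet x₀)
    (hSLT : StrongHSLTAt x₀ H) :
    smallLoopSet x₀ = (spanierWhole x₀ : Set (FundamentalGroup X x₀)) :=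
  smallLoopSet_subset_spanierWhole.antisymm (spanierWhole_subset_smallLoopSet hH hSLT)

end
end

section
/- Let X be locally path connected and H an open normal subgroup of π₁^{qtop}(X,x₀). Then X is a strong H-SLT space. -/
open CategoryTheory unitInterval
open scoped Topology

attribute [local instance] Path.Homotopic.setoid

noncomputable section

variable {X : Type*} [TopologicalSpace X]

/-- The quotient topology on the fundamental group induced by the compact-open topology on
the loop space, i.e. the topology of the quasitopological fundamental group `π₁^qtop`. -/
def qtop (x₀ : X) : TopologicalSpace (FundamentalGroup X x₀) :=
  TopologicalSpace.coinduced (fun γ : Path x₀ x₀ => loopClass γ) inferInstance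

/-- The conjugate subgroup `[δ⁻¹ H δ]` of the fundamental group at the endpoint of `δ`. -/
def conjSubgroup {x₀ x : X} (δ : Path x₀ x) (H : Subgroup (FundamentalGroup X x₀)) :
    Subgroup (FundamentalGroup X x) :=
  H.map (FundamentalGroup.fundamentalGroupMulEquivOfPath δ).toMonoidHom

/-- `X` is a strong `H`-SLT space: for every `x ∈ X` and every path `δ` from `x₀` to `x`,
`X` is a strong `[δ⁻¹Hδ]`-SLT space at `x`. -/
def StrongHSLT (x₀ : X) (H : Subgroup (FundamentalGroup X x₀)) : Prop :=
  ∀ (x : X) (δ : Path x₀ x), StrongHSLTAt x (conjSubgroup δ H)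

/-
Since `H` is open in `π₁^qtop`, for a path `η` from the base point to `y` the loops `β` at `y`
with `[η β η⁻¹] ∈ H` form an open subset of the loop space containing the constant loop; in the
compact-open topology such a set contains every loop lying in some neighbourhood `V` of `y`.
Normality of `H` makes the condition independent of `η`, so the constant loop can serve as `λ`.
Finally, conjugation by `δ` carries normality and openness of `H` over to `[δ⁻¹Hδ]`.
-/

open FundamentalGroup Set

lemma CategoryTheory.Iso.conj_mem_of_normal {C : Type*} [Groupoid C] {Y : C} {H : Subgroup (End Y)}
    (hH : H.Normal) (φ : Y ≅ Y) {f : End Y} (hf : f ∈ H) : φ.conj f ∈ H := by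
  have : φ.conj f = End.of φ.hom * f * (End.of φ.hom)⁻¹ := by
    rw [Iso.conj_apply]
    show _ = Groupoid.inv φ.hom ≫ f ≫ φ.hom
    rw [Groupoid.inv_eq_inv, IsIso.Iso.inv_hom]
  exact this ▸ hH.conj_mem f hf _

lemma loopClass_refl (x : X) : loopClass (Path.refl x) = 1 :=
  rfl

lemma loopClass_trans_trans_symm {x y : X} (η : Path x y) (β : Path y y) :
    loopClass (η.trans (β.trans η.symm)) = (fundamentalGroupMulEquivOfPath η).symm (loopClass β) :=
  rfl

lemma symm_fundamentalGroupMulEquivOfPath_mem_of_normal {x₀ y : X}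
    {H : Subgroup (FundamentalGroup X x₀)} (hH : H.Normal) (η η₀ : Path x₀ y)
    {g : FundamentalGroup X y} (hg : (fundamentalGroupMulEquivOfPath η₀).symm g ∈ H) :
    (fundamentalGroupMulEquivOfPath η).symm g ∈ H := by
  let iso (p : Path x₀ y) :=
    (Groupoid.isoEquivHom (FundamentalGroupoid.mk x₀) (FundamentalGroupoid.mk y)).symm ⟦p⟧
  change (iso η₀).symm.conj g ∈ H at hg
  change (iso η).symm.conj g ∈ H
  rw [← (iso η₀).self_symm_conj g, ← Iso.trans_conj]
  exact Iso.conj_mem_of_normal hH _ hg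

lemma Path.exists_isOpen_forall_mem_of_mem_nhds_refl {z : X} {S : Set (Path z z)}
    (hS : S ∈ 𝓝 (Path.refl z)) :
    ∃ W : Set X, IsOpen W ∧ z ∈ W ∧ ∀ γ : Path z z, (∀ t, γ t ∈ W) → γ ∈ S := by
  rw [nhds_induced] at hS
  obtain ⟨O, hO, hOS⟩ := hS
  obtain ⟨⟨K, W⟩, ⟨-, hzW, hW⟩, hKW⟩ :=
    ((nhds_basis_opens z).nhds_continuousMapConst (X := I)).mem_iff.mp hO
  exact ⟨W, hW, hzW, fun γ hγ => hOS (hKW fun t _ => hγ t)⟩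

lemma isOpen_setOf_loopClass_trans_trans_symm_mem {x y : X} {S : Set (FundamentalGroup X x)}
    (hS : IsOpen[qtop x] S) (η : Path x y) :
    IsOpen {β : Path y y | loopClass (η.trans (β.trans η.symm)) ∈ S} :=
  (isOpen_coinduced.mp hS).preimage
    (continuous_const.path_trans (continuous_id.path_trans continuous_const))

lemma isOpen_qtop_conjSubgroup {x₀ x : X} (δ : Path x₀ x) {H : Subgroup (FundamentalGroup X x₀)}
    (hH : IsOpen[qtop x₀] (H : Set (FundamentalGroup X x₀))) :
    IsOpen[qtop x] (conjSubgroup δ H : Set (FundamentalGroup X x)) := by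
  refine isOpen_coinduced.mpr ?_
  simp only [preimage, SetLike.mem_coe, conjSubgroup, Subgroup.mem_map_equiv,
    ← loopClass_trans_trans_symm]
  exact isOpen_setOf_loopClass_trans_trans_symm_mem hH δ

lemma Subgroup.Normal.conjSubgroup {x₀ x : X} (δ : Path x₀ x)
    {H : Subgroup (FundamentalGroup X x₀)} (hH : H.Normal) : (conjSubgroup δ H).Normal :=
  hH.map _ (MulEquiv.surjective _)

theorem strongHSLTAt_of_normal_of_isOpen {x₀ : X} {H : Subgroup (FundamentalGroup X x₀)}
    (hN : H.Normal) (hH : IsOpen[qtop x₀] (H : Set (FundamentalGroup X x₀))) :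
    StrongHSLTAt x₀ H := by
  intro y U _ hx₀U
  rcases isEmpty_or_nonempty (Path x₀ y) with _ | ⟨⟨α₀⟩⟩
  · exact ⟨univ, isOpen_univ, trivial, fun _ _ α => isEmptyElim α⟩
  have hrefl : Path.refl y ∈ {β | loopClass (α₀.trans (β.trans α₀.symm)) ∈ H} := by
    simpa only [mem_ofPred_eq, loopClass_trans_trans_symm, loopClass_refl, map_one] using H.one_mem
  obtain ⟨V, hV, hyV, hVH⟩ := Path.exists_isOpen_forall_mem_of_mem_nhds_refl
    ((isOpen_setOf_loopClass_trans_trans_symm_mem hH α₀).mem_nhds hrefl)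
  refine ⟨V, hV, hyV, fun β hβ α => ⟨Path.refl x₀, fun _ => hx₀U, ?_⟩⟩
  rw [loopClass_refl, inv_one, mul_one, loopClass_trans_trans_symm]
  exact symm_fundamentalGroupMulEquivOfPath_mem_of_normal hN α α₀ (hVH β hβ)

theorem strongHSLT_of_open_normal_qtop_general
    (x₀ : X) (H : Subgroup (FundamentalGroup X x₀)) (hN : H.Normal)
    (hopen : IsOpen[qtop x₀] (H : Set (FundamentalGroup X x₀))) :
    StrongHSLT x₀ H := fun _ δ =>
  strongHSLTAt_of_normal_of_isOpen (hN.conjSubgroup δ) (isOpen_qtop_conjSubgroup δ hopen)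

theorem strongHSLT_of_open_normal_qtop [LocallyPathConnectedSpace X]
    (x₀ : X) (H : Subgroup (FundamentalGroup X x₀)) (hN : H.Normal)
    (hopen : IsOpen[qtop x₀] (H : Set (FundamentalGroup X x₀))) :
    StrongHSLT x₀ H :=
  strongHSLT_of_open_normal_qtop_general x₀ H hN hopen
end
end
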